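/- arXiv:2605.07057 — 3 statements merged into one kernel-verified Lean document; each statement's English description precedes it below -/
import Mathlib

section
/- Consider a finite index set V = Fin n with a parent map pa : V → Finset V such that every w ∈ pa v satisfies w < v (a DAG presented in topological order). On a probability space whose underlying measurable space is standard Borel, let (U_v)_{v ∈ V} be given random variables (exogenous noises) with values in standard Borel spaces, and define endogenous variables recursively in topological order by X_v = f_v((X_w)_{w ∈ pa v}, U_v) for given measurable structural functions f_v. Assume the conditional independence of exogenous variables: for every v, U_v is conditionally independent of the family (U_w : w a nondescendant of v) given (X_w)_{w ∈ pa v}. Then the causal Markov condition holds: for every v, X_v is conditionally independent of the family (X_w : w a nondescendant of v) given (X_w)_{w ∈ pa v}. -/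
open MeasureTheory ProbabilityTheory

section Aux

open MeasurableSpace

/-- If `m₁` and `m₂` are conditionally independent given `m'`, then so are `m' ⊔ m₁` and `m₂`. -/
lemma condIndep_sup_left' {Ω : Type*} {m' m₁ m₂ : MeasurableSpace Ω} {mΩ : MeasurableSpace Ω}
    [StandardBorelSpace Ω] (hm' : m' ≤ mΩ) (hm₁ : m₁ ≤ mΩ) (hm₂ : m₂ ≤ mΩ)
    (μ : Measure Ω) [IsFiniteMeasure μ]
    (h : CondIndep m' m₁ m₂ hm' μ) : CondIndep m' (m' ⊔ m₁) m₂ hm' μ := by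
  set p1 : Set (Set Ω) :=
    {s | ∃ a, MeasurableSet[m'] a ∧ ∃ b, MeasurableSet[m₁] b ∧ s = a ∩ b} with hp1def
  have hle1 : m' ≤ m' ⊔ m₁ := le_sup_left
  have hle2 : m₁ ≤ m' ⊔ m₁ := le_sup_right
  have hgen : m' ⊔ m₁ = MeasurableSpace.generateFrom p1 := by
    refine le_antisymm (sup_le ?_ ?_) (MeasurableSpace.generateFrom_le ?_)
    · intro s hs
      exact .basic _ ⟨s, hs, Set.univ, MeasurableSet.univ, (Set.inter_univ s).symm⟩
    · intro s hs
      exact .basic _ ⟨Set.univ, MeasurableSet.univ, s, hs, (Set.univ_inter s).symm⟩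
    · rintro s ⟨a, ha, b, hb, rfl⟩
      exact (hle1 _ ha).inter (hle2 _ hb)
  have hp1 : IsPiSystem p1 := by
    rintro s ⟨a1, ha1, b1, hb1, rfl⟩ t ⟨a2, ha2, b2, hb2, rfl⟩ -
    refine ⟨a1 ∩ a2, ha1.inter ha2, b1 ∩ b2, hb1.inter hb2, ?_⟩
    ext x; simp only [Set.mem_inter_iff]; tauto
  refine CondIndepSets.condIndep (sup_le hm' hm₁) hm₂ hp1
    (@isPiSystem_measurableSet Ω m₂) hgen
    (@MeasurableSpace.generateFrom_measurableSet Ω m₂).symm ?_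
  rw [condIndepSets_iff]
  rotate_left
  · rintro s ⟨a, ha, b, hb, rfl⟩
    exact (hm' _ ha).inter (hm₁ _ hb)
  · exact fun s hs => hm₂ _ hs
  rintro t1 t2 ⟨a, ha, b, hb, rfl⟩ ht2
  have hbt2 : MeasurableSet (b ∩ t2) := (hm₁ _ hb).inter (hm₂ _ ht2)
  have h' : (μ⟦b ∩ t2 | m'⟧) =ᵐ[μ] (μ⟦b | m'⟧) * (μ⟦t2 | m'⟧) :=
    (condIndep_iff m' m₁ m₂ hm' hm₁ hm₂ μ).mp h b t2 hb ht2
  have e1 : (μ⟦a ∩ b ∩ t2 | m'⟧)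
      =ᵐ[μ] a.indicator (μ⟦b ∩ t2 | m'⟧) := by
    rw [Set.inter_assoc, show Set.indicator (a ∩ (b ∩ t2)) (fun _ => (1 : ℝ))
      = a.indicator ((b ∩ t2).indicator fun _ => (1 : ℝ)) from
      (Set.indicator_indicator a (b ∩ t2) fun _ => (1 : ℝ)).symm]
    exact condExp_indicator ((integrable_const (1 : ℝ)).indicator hbt2) ha
  have e2 : (μ⟦a ∩ b | m'⟧) =ᵐ[μ] a.indicator (μ⟦b | m'⟧) := by
    rw [show Set.indicator (a ∩ b) (fun _ => (1 : ℝ))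
      = a.indicator (b.indicator fun _ => (1 : ℝ)) from
      (Set.indicator_indicator a b fun _ => (1 : ℝ)).symm]
    exact condExp_indicator ((integrable_const (1 : ℝ)).indicator (hm₁ _ hb)) ha
  filter_upwards [e1, e2, h'] with ω h1 h2 h3
  rw [h1, Pi.mul_apply, h2]
  by_cases hω : ω ∈ a
  · rw [Set.indicator_of_mem hω, Set.indicator_of_mem hω, h3, Pi.mul_apply]
  · rw [Set.indicator_of_notMem hω, Set.indicator_of_notMem hω, zero_mul]

end Aux

section CausalMarkov

variable {n : ℕ}

/-- `w` is a descendant of `v` in the DAG with parent map `pa`: there is a directed path of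
length `≥ 1` from `v` to `w` (edges are `u → v` for `u ∈ pa v`). -/
def IsDesc (pa : Fin n → Finset (Fin n)) (v w : Fin n) : Prop :=
  Relation.TransGen (fun a b => a ∈ pa b) v w

/-- `w` is a nondescendant of `v`: `w ≠ v` and `w` is not a descendant of `v`. -/
def IsNondesc (pa : Fin n → Finset (Fin n)) (v w : Fin n) : Prop :=
  w ≠ v ∧ ¬ IsDesc pa v w

/-- Proposition 1: the causal Markov condition for SCMs with conditionally
independent noises.  Consider a DAG in topological order on `Fin n` (parent map `pa` with
`w ∈ pa v → w < v`).  On a standard Borel probability space, let `(U_v)` be exogenous noise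
variables with values in standard Borel spaces, and let the endogenous variables satisfy the
structural equations `X_v = f_v((X_w)_{w ∈ pa v}, U_v)` for measurable structural functions
`f_v`.  Assume that for every `v`, `U_v` is conditionally independent of the family
`(U_w : w a nondescendant of v)` given the parents `(X_w)_{w ∈ pa v}`.  Then the causal
Markov condition holds: for every `v`, `X_v` is conditionally independent of the family
`(X_w : w a nondescendant of v)` given `(X_w)_{w ∈ pa v}`. -/
theorem causal_markov_of_condIndep_noise
    {Ω : Type*} [mΩ : MeasurableSpace Ω] [StandardBorelSpace Ω] [Nonempty Ω]
    (μ : Measure Ω) [IsProbabilityMeasure μ]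
    (pa : Fin n → Finset (Fin n)) (pa_lt : ∀ ⦃v w⦄, w ∈ pa v → w < v)
    (N : Fin n → Type*) [∀ v, MeasurableSpace (N v)] [∀ v, StandardBorelSpace (N v)]
    [∀ v, Nonempty (N v)]
    (F : Fin n → Type*) [∀ v, MeasurableSpace (F v)]
    (U : ∀ v, Ω → N v) (hU : ∀ v, Measurable (U v))
    (X : ∀ v, Ω → F v) (hX : ∀ v, Measurable (X v))
    (f : ∀ v, ((∀ w : pa v, F w.1) × N v) → F v) (hf : ∀ v, Measurable (f v))
    (hXdef : ∀ v ω, X v ω = f v (fun w => X w.1 ω, U v ω))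
    (hCI : ∀ v, CondIndepFun
      (MeasurableSpace.comap (fun ω => fun w : pa v => X w.1 ω) inferInstance)
      ((measurable_pi_lambda _ fun w => hX w.1).comap_le)
      (U v)
      (fun ω => fun w : {w : Fin n // IsNondesc pa v w} => U w.1 ω) μ) :
    ∀ v, CondIndepFun
      (MeasurableSpace.comap (fun ω => fun w : pa v => X w.1 ω) inferInstance)
      ((measurable_pi_lambda _ fun w => hX w.1).comap_le)
      (X v)
      (fun ω => fun w : {w : Fin n // IsNondesc pa v w} => X w.1 ω) μ := by
  intro v
  have hm' : MeasurableSpace.comap (fun ω => fun w : pa v => X w.1 ω)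
      MeasurableSpace.pi ≤ mΩ := (measurable_pi_lambda _ fun w => hX w.1).comap_le
  have hUnd : Measurable (fun ω => fun w : {w : Fin n // IsNondesc pa v w} => U w.1 ω) :=
    measurable_pi_lambda _ fun w => hU w.1
  -- nondescendants are closed under taking parents
  have hnd_parent : ∀ ⦃w u : Fin n⦄, IsNondesc pa v w → u ∈ pa w → IsNondesc pa v u := by
    intro w u hw hu
    constructor
    · rintro rfl
      exact hw.2 (Relation.TransGen.single hu)
    · intro hdu
      exact hw.2 (Relation.TransGen.tail hdu hu)
  -- each nondescendant's endogenous variable is a measurable function of the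
  -- nondescendant noises
  have key : ∀ k : ℕ, ∀ w : Fin n, w.1 < k → IsNondesc pa v w →
      ∃ G : (∀ u : {u : Fin n // IsNondesc pa v u}, N u.1) → F w,
        Measurable G ∧ X w = fun ω => G (fun u => U u.1 ω) := by
    intro k
    induction k with
    | zero => exact fun w hw _ => absurd hw (Nat.not_lt_zero _)
    | succ k ih =>
      intro w hwk hw
      have h1 : ∀ u : pa w, ∃ G : (∀ t : {t : Fin n // IsNondesc pa v t}, N t.1) → F u.1,
          Measurable G ∧ X u.1 = fun ω => G (fun t => U t.1 ω) := fun u =>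
        ih u.1 (lt_of_lt_of_le (pa_lt u.2) (Nat.lt_succ_iff.mp hwk)) (hnd_parent hw u.2)
      choose G hGm hGe using h1
      refine ⟨fun g => f w (fun u => G u g, g ⟨w, hw⟩), ?_, ?_⟩
      · exact (hf w).comp ((measurable_pi_lambda _ fun u => hGm u).prodMk
          (measurable_pi_apply _))
      · funext ω
        rw [hXdef w ω]
        have : (fun u : pa w => X u.1 ω) = fun u => G u (fun t => U t.1 ω) := by
          funext u; rw [hGe u]
        rw [this]
  choose G hGm hGe using fun (w : {w : Fin n // IsNondesc pa v w}) => key n w.1 w.1.2 w.2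
  have hXnd_le : MeasurableSpace.comap
      (fun ω => fun w : {w : Fin n // IsNondesc pa v w} => X w.1 ω) MeasurableSpace.pi
      ≤ MeasurableSpace.comap
        (fun ω => fun w : {w : Fin n // IsNondesc pa v w} => U w.1 ω)
        MeasurableSpace.pi := by
    have hXnd : (fun ω => fun w : {w : Fin n // IsNondesc pa v w} => X w.1 ω)
        = (fun g => fun w : {w : Fin n // IsNondesc pa v w} => G w g)
          ∘ (fun ω => fun t : {t : Fin n // IsNondesc pa v t} => U t.1 ω) := by
      funext ω
      simp only [Function.comp_apply]
      funext w
      rw [hGe w]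
    rw [hXnd, ← MeasurableSpace.comap_comp]
    exact MeasurableSpace.comap_mono
      (Measurable.comap_le (measurable_pi_lambda _ fun w => hGm w))
  have hXv_le : MeasurableSpace.comap (X v) inferInstance
      ≤ MeasurableSpace.comap (fun ω => fun w : pa v => X w.1 ω) MeasurableSpace.pi
        ⊔ MeasurableSpace.comap (U v) inferInstance := by
    have hXv : X v = (f v) ∘ (fun ω => (fun w : pa v => X w.1 ω, U v ω)) := funext (hXdef v)
    rw [hXv, ← MeasurableSpace.comap_comp]
    refine le_trans (MeasurableSpace.comap_mono (hf v).comap_le) ?_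
    rw [show (Prod.instMeasurableSpace : MeasurableSpace ((∀ w : pa v, F w.1) × N v))
        = MeasurableSpace.comap Prod.fst MeasurableSpace.pi
          ⊔ MeasurableSpace.comap Prod.snd inferInstance from rfl,
      MeasurableSpace.comap_sup, MeasurableSpace.comap_comp, MeasurableSpace.comap_comp]
    exact le_rfl
  have hCIv := hCI v
  rw [condIndepFun_iff_condIndep] at hCIv ⊢
  have hsup := condIndep_sup_left' hm' (hU v).comap_le (hUnd.comap_le) μ hCIv
  exact condIndep_of_condIndep_of_le_right
    (condIndep_of_condIndep_of_le_left hsup hXv_le) hXnd_le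

end CausalMarkov
end

section
/- In a discrete Bayesian network, let C, S, D be pairwise disjoint sets of nodes such that (i) every parent of every node of C lies in C ∪ S, and (ii) every node of S ∪ D is a nondescendant of every node of C. Then for every assignment of values (x_C, x_S, x_D) such that the conditioning event has positive probability, ℙ(X_C = x_C | X_S = x_S, X_D = x_D) = ℙ(X_C = x_C | X_S = x_S) = ∏_{v ∈ C} k_v(values of pa v read from (x_C, x_S))(x_v), where X_C, X_S, X_D denote the tuples of coordinate random variables indexed by C, S, D under the measure induced by μ. -/
/-!
Summing a function that ignores coordinate `v` against a kernel for `x v` given the earlier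
coordinates gives a result independent of the kernel, by the involution
`(x, a) ↦ (x[v ↦ a], x v)` of `Cfg × E v`; peeling off the largest node, the same holds for all
nodes of a set `s` at once, against a function that ignores `s`.

On the event `{X_C = z_C, X_T = z_T}` the factors of `C` equal `∏_{v ∈ C} k_v(z)`, so
`ℙ(X_C = z_C, X_T = z_T)` is that product times the probability of `X_T = z_T` in the network
with `C` clamped to `z_C`. The nondescendants `N` of `C` contain `T`, are closed under taking
parents and keep their kernels under the clamping, so exchanging the kernels outside `N` shows
that clamping does not change the law of `X_T`. Taking `T = S ∪ D` and `T = S` gives both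
equalities.
-/

open scoped BigOperators Classical ENNReal

noncomputable section

/-- A discrete Bayesian network: finite nonempty value types `E v` for the nodes `v : Fin n`,
a parent map `pa` compatible with the ordering (`w ∈ pa v → w < v`), and for each node a
kernel assigning to every assignment of values to the parents a probability mass function
on `E v`. -/
structure BayesNet where
  n : ℕ
  E : Fin n → Type
  Efin : ∀ v, Fintype (E v)
  Ene : ∀ v, Nonempty (E v)
  pa : Fin n → Finset (Fin n)
  pa_lt : ∀ ⦃v w⦄, w ∈ pa v → w < v
  k : ∀ v, (∀ w : pa v, E w.1) → PMF (E v)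

namespace BayesNet

variable (B : BayesNet)

instance (v : Fin B.n) : Fintype (B.E v) := B.Efin v
instance (v : Fin B.n) : Nonempty (B.E v) := B.Ene v

/-- A configuration: a joint assignment of values to all nodes. -/
def Cfg := ∀ v, B.E v

instance : Nonempty B.Cfg := ⟨fun _ => Classical.arbitrary _⟩
instance : Fintype B.Cfg := by unfold Cfg; infer_instance

/-- The joint probability mass function: `μ {x} = ∏ v, k v (x restricted to pa v) (x v)`. -/
def jointPMF (x : B.Cfg) : ℝ≥0∞ := ∏ v, B.k v (fun w => x w.1) (x v)

/-- Elementary probability of an event under the joint probability mass function. -/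
def prob (A : Set B.Cfg) : ℝ≥0∞ := ∑' x : B.Cfg, A.indicator B.jointPMF x

/-- Elementary conditional probability `ℙ(A | B) = ℙ(A ∩ B)/ℙ(B)`. -/
def condProb (A C : Set B.Cfg) : ℝ≥0∞ := B.prob (A ∩ C) / B.prob C

/-- `w` is a descendant of `v`: there is a directed path of length `≥ 1` from `v` to `w`
(edges are `u → v` for `u ∈ pa v`). -/
def Desc (v w : Fin B.n) : Prop := Relation.TransGen (fun a b => a ∈ B.pa b) v w

/-- `w` is a nondescendant of `v`: `w ≠ v` and `w` is not a descendant of `v`. -/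
def Nondesc (v w : Fin B.n) : Prop := w ≠ v ∧ ¬ B.Desc v w

/-- The event that all coordinates in `V` agree with the reference configuration `z`. -/
def evt (V : Finset (Fin B.n)) (z : B.Cfg) : Set B.Cfg := {x | ∀ v ∈ V, x v = z v}

end BayesNet

open Function

section LocalKernel

variable {ι : Type*} [DecidableEq ι] {E : ι → Type*} [∀ i, Fintype (E i)]
  {R : Type*} [CommSemiring R]

theorem sum_sum_update_eq_sum_sum [Fintype ι] {M : Type*} [AddCommMonoid M] (v : ι)
    (φ : (∀ i, E i) → E v → M) :
    ∑ x, ∑ a, φ (update x v a) (x v) = ∑ x, ∑ a, φ x a := by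
  let σ : (∀ i, E i) × E v → (∀ i, E i) × E v := fun p => (update p.1 v p.2, p.1 v)
  have hσ : Involutive σ := fun p => by simp [σ]
  calc ∑ x, ∑ a, φ (update x v a) (x v) = ∑ p, φ (σ p).1 (σ p).2 :=
        (Fintype.sum_prod_type' fun x a => φ (update x v a) (x v)).symm
    _ = ∑ p : (∀ i, E i) × E v, φ p.1 p.2 := Equiv.sum_comp hσ.toPerm fun p => φ p.1 p.2
    _ = ∑ x, ∑ a, φ x a := Fintype.sum_prod_type' φ

theorem sum_mul_eq_sum_mul_of_sum_update [Fintype ι] (v : ι) {F g g' : (∀ i, E i) → R}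
    (hF : ∀ x a, F (update x v a) = F x) (hg : ∀ x, ∑ a, g (update x v a) = 1)
    (hg' : ∀ x, ∑ a, g' (update x v a) = 1) :
    ∑ x, F x * g x = ∑ x, F x * g' x :=
  calc ∑ x, F x * g x = ∑ x, ∑ a, F x * g x * g' (update x v a) := by
        simp_rw [← Finset.mul_sum, hg', mul_one]
    _ = ∑ x, ∑ a, F (update x v a) * g (update x v a) * g' (update (update x v a) v (x v)) :=
        (sum_sum_update_eq_sum_sum v fun y b => F y * g y * g' (update y v b)).symm
    _ = ∑ x, ∑ a, F x * g' x * g (update x v a) := by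
        simp only [hF, update_idem, update_eq_self, mul_right_comm]
    _ = ∑ x, F x * g' x := by
        simp_rw [← Finset.mul_sum, hg, mul_one]

variable [LinearOrder ι]

def IsLocalKernel (v : ι) (g : (∀ i, E i) → R) : Prop :=
  (∀ x y, (∀ w ≤ v, x w = y w) → g x = g y) ∧ ∀ x, ∑ a, g (update x v a) = 1

theorem isLocalKernel_ite_eq (v : ι) (c : E v) :
    IsLocalKernel v fun x : ∀ i, E i => if x v = c then (1 : R) else 0 :=
  ⟨fun x y h => by simp only [h v le_rfl], fun x => by simp⟩

theorem sum_mul_prod_eq_sum_mul_prod_ite [Fintype ι] (x₀ : ∀ i, E i) {g : ι → (∀ i, E i) → R}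
    (s : Finset ι) (hg : ∀ v ∈ s, IsLocalKernel v (g v)) (f : (∀ i, E i) → R)
    (hf : ∀ x y, (∀ w ∉ s, x w = y w) → f x = f y) :
    ∑ x, f x * ∏ v ∈ s, g v x = ∑ x, f x * ∏ v ∈ s, if x v = x₀ v then 1 else 0 := by
  induction s using Finset.induction_on_max generalizing f with
  | empty => rfl
  | insert a s hlt ih =>
    have ha : a ∉ s := fun h => lt_irrefl a (hlt a h)
    have hgs : ∀ v ∈ s, IsLocalKernel v (g v) := fun v hv => hg v (Finset.mem_insert_of_mem hv)
    have hF : ∀ x b, f (update x a b) * ∏ v ∈ s, g v (update x a b) = f x * ∏ v ∈ s, g v x := by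
      intro x b
      congr 1
      · exact hf _ _ fun w hw =>
          update_of_ne (ne_of_mem_of_not_mem (Finset.mem_insert_self a s) hw).symm _ _
      · exact Finset.prod_congr rfl fun v hv =>
          (hgs v hv).1 _ _ fun w hw => update_of_ne (hw.trans_lt (hlt v hv)).ne _ _
    -- A point mass at `a` only sees coordinate `a ∉ s`, so `f * δ` still ignores `s`.
    let δ : (∀ i, E i) → R := fun x => if x a = x₀ a then 1 else 0
    calc ∑ x, f x * ∏ v ∈ insert a s, g v x
        = ∑ x, (f x * ∏ v ∈ s, g v x) * g a x := by
          simp only [Finset.prod_insert ha, mul_comm (g a _), mul_assoc]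
      _ = ∑ x, (f x * ∏ v ∈ s, g v x) * δ x :=
          sum_mul_eq_sum_mul_of_sum_update a hF (hg a (Finset.mem_insert_self a s)).2
            (isLocalKernel_ite_eq a (x₀ a)).2
      _ = ∑ x, (f x * δ x) * ∏ v ∈ s, g v x := by simp only [mul_right_comm]
      _ = ∑ x, (f x * δ x) * ∏ v ∈ s, if x v = x₀ v then 1 else 0 := by
          refine ih hgs _ fun x y h => ?_
          rw [hf x y fun w hw => h w fun hws => hw (Finset.mem_insert_of_mem hws)]
          simp only [δ, h a ha]
      _ = ∑ x, f x * ∏ v ∈ insert a s, if x v = x₀ v then 1 else 0 := by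
          simp only [Finset.prod_insert ha, δ, mul_assoc]

theorem sum_mul_prod_eq_of_isLocalKernel [Fintype ι] {g g' : ι → (∀ i, E i) → R}
    {s : Finset ι} (hg : ∀ v ∈ s, IsLocalKernel v (g v)) (hg' : ∀ v ∈ s, IsLocalKernel v (g' v))
    (f : (∀ i, E i) → R) (hf : ∀ x y, (∀ w ∉ s, x w = y w) → f x = f y) :
    ∑ x, f x * ∏ v ∈ s, g v x = ∑ x, f x * ∏ v ∈ s, g' v x := by
  rcases isEmpty_or_nonempty (∀ i, E i) with hE | ⟨⟨x₀⟩⟩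
  · simp only [Finset.univ_eq_empty, Finset.sum_empty]
  · rw [sum_mul_prod_eq_sum_mul_prod_ite x₀ s hg f hf,
      sum_mul_prod_eq_sum_mul_prod_ite x₀ s hg' f hf]

end LocalKernel

namespace BayesNet

variable {B : BayesNet}

def factor (v : Fin B.n) (x : B.Cfg) : ℝ≥0∞ := B.k v (fun w => x w.1) (x v)

theorem factor_congr {v : Fin B.n} {x y : B.Cfg} (h : ∀ w ∈ insert v (B.pa v), x w = y w) :
    B.factor v x = B.factor v y := by
  rw [factor, factor, h v (Finset.mem_insert_self v _)]
  congr 2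
  exact funext fun w => h w (Finset.mem_insert_of_mem w.2)

theorem isLocalKernel_factor (v : Fin B.n) : IsLocalKernel v (B.factor v) := by
  refine ⟨fun x y h => factor_congr fun w hw => h w ?_, fun x => ?_⟩
  · rcases Finset.mem_insert.mp hw with rfl | hw
    exacts [le_rfl, (B.pa_lt hw).le]
  · have hpa : ∀ a, (fun w : {w // w ∈ B.pa v} => update x v a w.1) =
        fun w : {w // w ∈ B.pa v} => x w.1 :=
      fun a => funext fun w => update_of_ne (B.pa_lt w.2).ne _ _
    simp only [factor, hpa, update_self]
    simpa only [tsum_fintype] using (B.k v fun w => x w.1).tsum_coe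

theorem jointPMF_eq_prod_factor (x : B.Cfg) : B.jointPMF x = ∏ v, B.factor v x := rfl

theorem prob_eq_sum (A : Set B.Cfg) : B.prob A = ∑ x : B.Cfg, A.indicator B.jointPMF x :=
  tsum_fintype _

theorem prob_ne_top (A : Set B.Cfg) : B.prob A ≠ ⊤ := by
  rw [prob_eq_sum]
  refine ENNReal.sum_ne_top.mpr fun x _ => ne_top_of_le_ne_top ?_ (Set.indicator_le_self A _ x)
  exact ENNReal.prod_ne_top fun v _ => PMF.apply_ne_top _ _

theorem prob_mono {A A' : Set B.Cfg} (h : A ⊆ A') : B.prob A ≤ B.prob A' :=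
  ENNReal.tsum_le_tsum fun x => Set.indicator_le_indicator_of_subset h (fun _ => zero_le) x

theorem evt_inter_evt (U V : Finset (Fin B.n)) (z : B.Cfg) :
    B.evt U z ∩ B.evt V z = B.evt (U ∪ V) z := by
  ext x
  simp only [evt, Set.mem_inter_iff, Set.mem_ofPred_eq, Finset.mem_union, or_imp, forall_and]

theorem evt_mono {U V : Finset (Fin B.n)} (h : U ⊆ V) (z : B.Cfg) : B.evt V z ⊆ B.evt U z :=
  fun _ hx v hv => hx v (h hv)

/-- The marginal law of an ancestrally closed set `N` only involves the kernels of `N`. -/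
theorem sum_indicator_prod_eq_prob {g : Fin B.n → B.Cfg → ℝ≥0∞} {N T : Finset (Fin B.n)}
    (hTN : T ⊆ N) (hN : ∀ v ∈ N, B.pa v ⊆ N) (hgN : ∀ v ∈ N, g v = B.factor v)
    (hg : ∀ v ∉ N, IsLocalKernel v (g v)) (z : B.Cfg) :
    ∑ x : B.Cfg, (B.evt T z).indicator (fun x => ∏ v, g v x) x = B.prob (B.evt T z) := by
  let f : B.Cfg → ℝ≥0∞ := (B.evt T z).indicator fun x => ∏ v ∈ N, B.factor v x
  have hsplit : ∀ h : Fin B.n → B.Cfg → ℝ≥0∞, (∀ v ∈ N, h v = B.factor v) → ∀ x,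
      (B.evt T z).indicator (fun x => ∏ v, h v x) x = f x * ∏ v ∈ Nᶜ, h v x := by
    intro h hh x
    have hprod : (fun x => ∏ v, h v x) = fun x => (∏ v ∈ N, B.factor v x) * ∏ v ∈ Nᶜ, h v x :=
      funext fun x => by
        rw [← Finset.prod_mul_prod_compl N,
          Finset.prod_congr rfl fun v hv => congrFun (hh v hv) x]
    rw [hprod]
    exact Set.indicator_mul_left _ _ _
  have hf : ∀ x y, (∀ w ∉ Nᶜ, x w = y w) → f x = f y := by
    intro x y h
    replace h : ∀ w ∈ N, x w = y w := fun w hw => h w (Finset.notMem_compl.mpr hw)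
    have hxy : x ∈ B.evt T z ↔ y ∈ B.evt T z :=
      forall₂_congr fun w hw => by rw [h w (hTN hw)]
    simp only [f, Set.indicator_apply, hxy, Finset.prod_congr rfl fun v hv =>
      factor_congr (x := x) (y := y) fun w hw => h w (Finset.insert_subset hv (hN v hv) hw)]
  rw [prob_eq_sum]
  calc ∑ x : B.Cfg, (B.evt T z).indicator (fun x => ∏ v, g v x) x
      = ∑ x : B.Cfg, f x * ∏ v ∈ Nᶜ, g v x := Finset.sum_congr rfl fun x _ => hsplit g hgN x
    _ = ∑ x : B.Cfg, f x * ∏ v ∈ Nᶜ, B.factor v x :=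
        sum_mul_prod_eq_of_isLocalKernel (fun v hv => hg v (Finset.mem_compl.mp hv))
          (fun v _ => isLocalKernel_factor v) f hf
    _ = ∑ x : B.Cfg, (B.evt T z).indicator B.jointPMF x :=
        Finset.sum_congr rfl fun x _ => (hsplit B.factor (fun _ _ => rfl) x).symm

def nondescOf (C : Finset (Fin B.n)) : Finset (Fin B.n) :=
  Finset.univ.filter fun w => ∀ v ∈ C, B.Nondesc v w

theorem pa_subset_nondescOf {C : Finset (Fin B.n)} {w : Fin B.n} (hw : w ∈ B.nondescOf C) :
    B.pa w ⊆ B.nondescOf C := by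
  intro u hu
  simp only [nondescOf, Finset.mem_filter, Finset.mem_univ, true_and] at hw ⊢
  refine fun v hv => ⟨?_, fun hvu => (hw v hv).2 (.tail hvu hu)⟩
  rintro rfl
  exact (hw u hv).2 (.single hu)

theorem disjoint_nondescOf (C : Finset (Fin B.n)) : Disjoint C (B.nondescOf C) :=
  Finset.disjoint_left.mpr fun v hv hvN => ((Finset.mem_filter.mp hvN).2 v hv).1 rfl

/-- The network in which the nodes of `C` are clamped to their values in `z`. -/
def clampFactor (C : Finset (Fin B.n)) (z : B.Cfg) (v : Fin B.n) (x : B.Cfg) : ℝ≥0∞ :=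
  if v ∈ C then (if x v = z v then 1 else 0) else B.factor v x

theorem isLocalKernel_clampFactor (C : Finset (Fin B.n)) (z : B.Cfg) (v : Fin B.n) :
    IsLocalKernel v (B.clampFactor C z v) := by
  unfold clampFactor
  split_ifs
  exacts [isLocalKernel_ite_eq v (z v), isLocalKernel_factor v]

theorem indicator_evt_union_jointPMF_eq {C T : Finset (Fin B.n)} (hpa : ∀ v ∈ C, B.pa v ⊆ C ∪ T)
    (z x : B.Cfg) :
    (B.evt (C ∪ T) z).indicator B.jointPMF x =
      (∏ v ∈ C, B.factor v z) * (B.evt T z).indicator (fun x => ∏ v, B.clampFactor C z v x) x := by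
  by_cases hT : x ∈ B.evt T z
  swap
  · rw [Set.indicator_of_notMem hT, Set.indicator_of_notMem fun h => hT
      (evt_mono Finset.subset_union_right z h), mul_zero]
  by_cases hC : x ∈ B.evt C z
  · have hCT : x ∈ B.evt (C ∪ T) z := evt_inter_evt C T z ▸ ⟨hC, hT⟩
    have hK : ∏ v ∈ C, B.factor v x = ∏ v ∈ C, B.factor v z :=
      Finset.prod_congr rfl fun v hv => factor_congr fun w hw =>
        hCT w (Finset.insert_subset (Finset.mem_union_left T hv) (hpa v hv) hw)
    have hclampC : ∏ v ∈ C, B.clampFactor C z v x = 1 :=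
      Finset.prod_eq_one fun v hv => by simp [clampFactor, hv, hC v hv]
    have hclampCc : ∏ v ∈ Cᶜ, B.clampFactor C z v x = ∏ v ∈ Cᶜ, B.factor v x :=
      Finset.prod_congr rfl fun v hv => by simp [clampFactor, Finset.mem_compl.mp hv]
    rw [Set.indicator_of_mem hCT, Set.indicator_of_mem hT, jointPMF_eq_prod_factor,
      ← Finset.prod_mul_prod_compl C (fun v => B.factor v x),
      ← Finset.prod_mul_prod_compl C (fun v => B.clampFactor C z v x), hK, hclampC, hclampCc,
      one_mul]
  · obtain ⟨v, hv, hne⟩ : ∃ v ∈ C, x v ≠ z v := by simpa [evt] using hC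
    rw [Set.indicator_of_notMem fun h => hC (evt_mono Finset.subset_union_left z h),
      Set.indicator_of_mem hT, Finset.prod_eq_zero (Finset.mem_univ v)
        (by simp [clampFactor, hv, hne]), mul_zero]

theorem prob_evt_union_eq_prod_mul {C T : Finset (Fin B.n)} (hpa : ∀ v ∈ C, B.pa v ⊆ C ∪ T)
    (hnd : ∀ w ∈ T, ∀ v ∈ C, B.Nondesc v w) (z : B.Cfg) :
    B.prob (B.evt (C ∪ T) z) = (∏ v ∈ C, B.factor v z) * B.prob (B.evt T z) := by
  have hTN : T ⊆ B.nondescOf C := fun w hw =>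
    Finset.mem_filter.mpr ⟨Finset.mem_univ w, hnd w hw⟩
  rw [prob_eq_sum, Finset.sum_congr rfl fun x _ => indicator_evt_union_jointPMF_eq hpa z x,
    ← Finset.mul_sum, sum_indicator_prod_eq_prob (g := B.clampFactor C z) hTN
      (fun _ => pa_subset_nondescOf)
      (fun v hv => funext fun x => if_neg (Finset.disjoint_right.mp (disjoint_nondescOf C) hv))
      (fun v _ => isLocalKernel_clampFactor C z v) z]

theorem condProb_evt_eq_prod {C T : Finset (Fin B.n)} (hpa : ∀ v ∈ C, B.pa v ⊆ C ∪ T)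
    (hnd : ∀ w ∈ T, ∀ v ∈ C, B.Nondesc v w) (z : B.Cfg) (hpos : B.prob (B.evt T z) ≠ 0) :
    B.condProb (B.evt C z) (B.evt T z) = ∏ v ∈ C, B.factor v z := by
  rw [condProb, evt_inter_evt, prob_evt_union_eq_prod_mul hpa hnd,
    ENNReal.mul_div_cancel_right hpos (prob_ne_top _)]

theorem condProb_factorization_general (B : BayesNet) (C S D : Finset (Fin B.n))
    (hpa : ∀ v ∈ C, B.pa v ⊆ C ∪ S)
    (hnd : ∀ w ∈ S ∪ D, ∀ v ∈ C, B.Nondesc v w)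
    (z : B.Cfg)
    (hpos : B.prob (B.evt (S ∪ D) z) ≠ 0) :
    B.condProb (B.evt C z) (B.evt (S ∪ D) z) = B.condProb (B.evt C z) (B.evt S z) ∧
    B.condProb (B.evt C z) (B.evt S z) =
      ∏ v ∈ C.attach, B.k v.1 (fun w => z w.1) (z v.1) := by
  have hposS : B.prob (B.evt S z) ≠ 0 :=
    ((pos_iff_ne_zero.mpr hpos).trans_le (prob_mono (evt_mono Finset.subset_union_left z))).ne'
  have hSD := condProb_evt_eq_prod
    (fun v hv => (hpa v hv).trans (Finset.union_subset_union_right Finset.subset_union_left))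
    hnd z hpos
  have hS := condProb_evt_eq_prod hpa (fun w hw => hnd w (Finset.mem_union_left D hw)) z hposS
  exact ⟨hSD.trans hS.symm, hS.trans (Finset.prod_attach C fun v => B.factor v z).symm⟩

/-- In a discrete Bayesian network, let `C`, `S`, `D` be pairwise disjoint
sets of nodes such that (i) every parent of every node of `C` lies in `C ∪ S`, and (ii) every
node of `S ∪ D` is a nondescendant of every node of `C`.  Then for every assignment of values
(read off a reference configuration `z`) whose conditioning event has positive probability,
`ℙ(X_C = x_C | X_S = x_S, X_D = x_D) = ℙ(X_C = x_C | X_S = x_S)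
  = ∏_{v ∈ C} k_v(x restricted to pa v)(x_v)`. -/
theorem condProb_factorization (B : BayesNet) (C S D : Finset (Fin B.n))
    (hCS : Disjoint C S) (hCD : Disjoint C D) (hSD : Disjoint S D)
    (hpa : ∀ v ∈ C, B.pa v ⊆ C ∪ S)
    (hnd : ∀ w ∈ S ∪ D, ∀ v ∈ C, B.Nondesc v w)
    (z : B.Cfg)
    (hpos : B.prob (B.evt (S ∪ D) z) ≠ 0) :
    B.condProb (B.evt C z) (B.evt (S ∪ D) z) = B.condProb (B.evt C z) (B.evt S z) ∧
    B.condProb (B.evt C z) (B.evt S z) =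
      ∏ v ∈ C.attach, B.k v.1 (fun w => z w.1) (z v.1) :=
  condProb_factorization_general B C S D hpa hnd z hpos

end BayesNet
end
end

section
/- Consider a finite-horizon decision process with horizon T, finite nonempty history spaces H_0, …, H_T, finite nonempty action set 𝒜, transition kernels P_t : H_t × 𝒜 → PMF H_{t+1} for t < T, and expected rewards r_t : H_t × 𝒜 → ℝ. Suppose there are maps φ_t : H_t → 𝒮_t and functions ρ_t : 𝒮_t × 𝒜 → ℝ such that (i) r_t(h, a) = ρ_t(φ_t(h), a) for all t, h, a, and (ii) for all t < T, all a ∈ 𝒜, and all h, h' ∈ H_t with φ_t(h) = φ_t(h'), the pushforward of P_t(h, a) under φ_{t+1} equals the pushforward of P_t(h', a) under φ_{t+1}. Then for every t, a and all h, h' ∈ H_t with φ_t(h) = φ_t(h'), the optimal Q-functions satisfy Q_t(h, a) = Q_t(h', a); in particular the set of maximizing actions argmax_a Q_t(h, a) depends on h only through φ_t(h). -/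
open scoped BigOperators

section SufficientStatistic

variable {T : ℕ} {H : ℕ → Type*} {𝒜 : Type*}

/-- The optimal `Q`-functions of a finite-horizon decision process, defined by backward
recursion with fuel `d = T − t`:
`Q_T(h,a) = r_T(h,a)` and
`Q_t(h,a) = r_t(h,a) + E_{h' ∼ P_t(h,a)}[max_{a'} Q_{t+1}(h',a')]`. -/
noncomputable def optQ [Fintype 𝒜] [Nonempty 𝒜] [∀ t, Fintype (H t)]
    (T : ℕ) (P : ∀ t, t < T → H t → 𝒜 → PMF (H (t + 1)))
    (r : ∀ t, H t → 𝒜 → ℝ) : (d : ℕ) → (t : ℕ) → H t → 𝒜 → ℝ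
  | 0, t, h, a => r t h a
  | d + 1, t, h, a =>
    if ht : t < T then
      r t h a + ∑ h' : H (t + 1),
        ((P t ht h a) h').toReal *
          (Finset.univ.sup' Finset.univ_nonempty fun a' : 𝒜 => optQ T P r d (t + 1) h' a')
    else r t h a

lemma sum_mul_comp_eq {H' : Type*} [Fintype H'] {S : Type*} [DecidableEq S] (p : PMF H') (ψ : H' → S)
    (G : S → ℝ) :
    ∑ h, (p h).toReal * G (ψ h)
      = ∑ s ∈ Finset.univ.image ψ, ((p.map ψ) s).toReal * G s := by
  rw [← Finset.sum_fiberwise_of_maps_to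
      (fun h _ => Finset.mem_image_of_mem ψ (Finset.mem_univ h))
      (fun h => (p h).toReal * G (ψ h))]
  refine Finset.sum_congr rfl fun s _ => ?_
  have h1 : ∀ h ∈ Finset.univ.filter (fun h => ψ h = s),
      (p h).toReal * G (ψ h) = (p h).toReal * G s := by
    intro h hh
    rw [(Finset.mem_filter.mp hh).2]
  rw [Finset.sum_congr rfl h1, ← Finset.sum_mul]
  congr 1
  rw [PMF.map_apply, tsum_fintype,
    ENNReal.toReal_sum (by intro a _; split <;> simp [PMF.apply_ne_top]),
    Finset.sum_filter]
  refine Finset.sum_congr rfl fun h _ => ?_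
  by_cases hψ : ψ h = s
  · simp [hψ]
  · simp [hψ, (Ne.symm hψ : ¬ s = ψ h)]

lemma optQ_aux [Fintype 𝒜] [Nonempty 𝒜] [∀ t, Fintype (H t)]
    (T : ℕ) (P : ∀ t, t < T → H t → 𝒜 → PMF (H (t + 1)))
    (r : ∀ t, H t → 𝒜 → ℝ)
    (𝒮 : ℕ → Type*) (φ : ∀ t, H t → 𝒮 t) (ρ : ∀ t, 𝒮 t → 𝒜 → ℝ)
    (hr : ∀ t, t ≤ T → ∀ (h : H t) (a : 𝒜), r t h a = ρ t (φ t h) a)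
    (hP : ∀ t (ht : t < T) (a : 𝒜) (h h' : H t), φ t h = φ t h' →
      (P t ht h a).map (φ (t + 1)) = (P t ht h' a).map (φ (t + 1))) :
    ∀ d t, t ≤ T → T - t = d → ∀ (h h' : H t), φ t h = φ t h' →
      ∀ a : 𝒜, optQ T P r d t h a = optQ T P r d t h' a := by
  intro d
  induction d with
  | zero =>
    intro t htT _ h h' hφ a
    simp only [optQ]
    rw [hr t htT h a, hr t htT h' a, hφ]
  | succ d ih =>
    intro t htT hd h h' hφ a
    classical
    have ht : t < T := by omega
    have hd1 : T - (t + 1) = d := by omega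
    simp only [optQ, dif_pos ht]
    rw [hr t htT h a, hr t htT h' a, hφ]
    congr 1
    set V : H (t + 1) → ℝ := fun h'' =>
      Finset.univ.sup' Finset.univ_nonempty fun a' : 𝒜 => optQ T P r d (t + 1) h'' a' with hV
    have hVfac : ∀ x y : H (t + 1), φ (t + 1) x = φ (t + 1) y → V x = V y := by
      intro x y hxy
      exact Finset.sup'_congr _ rfl fun a' _ => ih (t + 1) ht hd1 x y hxy a'
    let G : 𝒮 (t + 1) → ℝ := fun s => if hx : ∃ x, φ (t + 1) x = s then V hx.choose else 0
    have hG : ∀ x, V x = G (φ (t + 1) x) := by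
      intro x
      have hx : ∃ y, φ (t + 1) y = φ (t + 1) x := ⟨x, rfl⟩
      simp only [G, dif_pos hx]
      exact (hVfac hx.choose x hx.choose_spec).symm
    calc ∑ h'' : H (t + 1), ((P t ht h a) h'').toReal * V h''
        = ∑ h'' : H (t + 1), ((P t ht h a) h'').toReal * G (φ (t + 1) h'') := by
          simp_rw [← hG]
      _ = ∑ s ∈ Finset.univ.image (φ (t + 1)),
            (((P t ht h a).map (φ (t + 1))) s).toReal * G s :=
          sum_mul_comp_eq _ _ _
      _ = ∑ s ∈ Finset.univ.image (φ (t + 1)),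
            (((P t ht h' a).map (φ (t + 1))) s).toReal * G s := by
          rw [hP t ht a h h' hφ]
      _ = ∑ h'' : H (t + 1), ((P t ht h' a) h'').toReal * G (φ (t + 1) h'') :=
          (sum_mul_comp_eq _ _ _).symm
      _ = ∑ h'' : H (t + 1), ((P t ht h' a) h'').toReal * V h'' := by
          simp_rw [← hG]

/-- sufficient-statistic lemma.  Consider a finite-horizon decision process
with horizon `T`, finite nonempty history spaces `H_t`, finite nonempty action set `𝒜`,
transition kernels `P_t : H_t × 𝒜 → PMF (H_{t+1})` and expected rewards `r_t : H_t × 𝒜 → ℝ`.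
Suppose there are maps `φ_t : H_t → 𝒮_t` and functions `ρ_t : 𝒮_t × 𝒜 → ℝ` such that
(i) `r_t (h, a) = ρ_t (φ_t h, a)`, and (ii) histories with the same abstraction have the same
abstracted transition law: `φ_t h = φ_t h'` implies that the pushforward of `P_t (h, a)` under
`φ_{t+1}` equals that of `P_t (h', a)`.  Then the optimal `Q`-functions satisfy
`Q_t (h, a) = Q_t (h', a)` whenever `φ_t h = φ_t h'`; in particular the set of maximizing
actions depends on `h` only through `φ_t h`. -/
theorem optQ_factors_through_sufficient_statistic
    [Fintype 𝒜] [Nonempty 𝒜] [∀ t, Fintype (H t)] [∀ t, Nonempty (H t)]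
    (T : ℕ) (P : ∀ t, t < T → H t → 𝒜 → PMF (H (t + 1)))
    (r : ∀ t, H t → 𝒜 → ℝ)
    (𝒮 : ℕ → Type*) (φ : ∀ t, H t → 𝒮 t) (ρ : ∀ t, 𝒮 t → 𝒜 → ℝ)
    (hr : ∀ t, t ≤ T → ∀ (h : H t) (a : 𝒜), r t h a = ρ t (φ t h) a)
    (hP : ∀ t (ht : t < T) (a : 𝒜) (h h' : H t), φ t h = φ t h' →
      (P t ht h a).map (φ (t + 1)) = (P t ht h' a).map (φ (t + 1))) :
    ∀ t, t ≤ T → ∀ (h h' : H t), φ t h = φ t h' →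
      (∀ a : 𝒜, optQ T P r (T - t) t h a = optQ T P r (T - t) t h' a) ∧
      {a : 𝒜 | ∀ b : 𝒜, optQ T P r (T - t) t h b ≤ optQ T P r (T - t) t h a} =
        {a : 𝒜 | ∀ b : 𝒜, optQ T P r (T - t) t h' b ≤ optQ T P r (T - t) t h' a} := by
  intro t htT h h' hφ
  have key : ∀ a : 𝒜, optQ T P r (T - t) t h a = optQ T P r (T - t) t h' a :=
    optQ_aux T P r 𝒮 φ ρ hr hP (T - t) t htT rfl h h' hφ
  refine ⟨key, ?_⟩
  ext a
  simp only [Set.mem_setOf_eq, key]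

end SufficientStatistic
end
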